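/- Let k ≥ 2 be an integer and let L be a nonempty language over an alphabet of size k (a nonempty set of finite lists over Fin k). Suppose there exist functions Pad : Σ* × Σ* → Σ* and Dec : Σ* → Σ* such that for all words x, y: (i) Pad(x, y) ∈ L ⟺ x ∈ L, (ii) Dec(Pad(x, y)) = y, and (iii) there is a polynomial p with |Pad(x, y)| ≤ p(|x| + |y|) for all x, y, where |·| denotes word length. Then L is not sparse: there is no polynomial q such that for all n ∈ ℕ, the number of words w ∈ L with |w| ≤ n is at most q(n). -/

import Mathlib

/-!
Fix `x₀ ∈ L`. The map `y ↦ Pad (x₀, y)` is injective (`Dec` inverts it) and sends the `k ^ n`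
words of length `n` into the words of `L` of length at most `p (|x₀| + n)`. A sparseness
bound `q` would then give `k ^ n ≤ q (p (|x₀| + n))` for every `n`, impossible since a
polynomial is eventually smaller than `k ^ n`.
-/

open Filter Asymptotics Polynomial

theorem Polynomial.eventually_eval_nat_lt_pow (r : ℕ[X]) {b : ℕ} (hb : 1 < b) :
    ∀ᶠ n in atTop, r.eval n < b ^ n := by
  have hb0 : (0 : ℝ) < b := by positivity
  set P := r.map (Nat.castRingHom ℝ)
  have hP : (fun n : ℕ ↦ P.eval (n : ℝ)) =O[atTop] fun n : ℕ ↦ (n : ℝ) ^ P.natDegree := by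
    simpa [Function.comp_def] using (P.isBigO_atTop_of_degree_le (X ^ P.natDegree)
      (by simp)).comp_tendsto tendsto_natCast_atTop_atTop
  have hlt := (hP.trans_isLittleO (isLittleO_pow_const_const_pow_of_one_lt _
    (Nat.one_lt_cast.mpr hb))).eventuallyLT_norm_of_eventually_pos
    (.of_forall fun n ↦ by simpa using pow_pos hb0 n)
  filter_upwards [hlt] with n hn
  simp only [P, eval_natCast_map, Nat.coe_castRingHom, norm_pow, Real.norm_natCast] at hn
  exact_mod_cast hn

theorem List.ncard_setOf_length_eq (α : Type*) [Fintype α] (n : ℕ) :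
    {l : List α | l.length = n}.ncard = Fintype.card α ^ n := by
  rw [← Nat.card_coe_set_eq, ← card_vector n, ← Nat.card_eq_fintype_card]
  rfl

/-- No paddable language (over an alphabet of size at least two) is sparse:
if a nonempty language `L` over `Fin k` (`k ≥ 2`) has a padding/decoding pair
`Pad`, `Dec` with `Pad (x, y) ∈ L ↔ x ∈ L`, `Dec (Pad (x, y)) = y`, and
`|Pad (x, y)| ≤ p (|x| + |y|)` for some polynomial `p`, then there is no
polynomial `q` with `|{w ∈ L : |w| ≤ n}| ≤ q n` for all `n`. -/
theorem paddable_not_sparse (k : ℕ) (hk : 2 ≤ k)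
    (L : Set (List (Fin k))) (hL : L.Nonempty)
    (Pad : List (Fin k) × List (Fin k) → List (Fin k))
    (Dec : List (Fin k) → List (Fin k))
    (hPad : ∀ x y : List (Fin k), Pad (x, y) ∈ L ↔ x ∈ L)
    (hDec : ∀ x y : List (Fin k), Dec (Pad (x, y)) = y)
    (hpoly : ∃ p : Polynomial ℕ,
      ∀ x y : List (Fin k), (Pad (x, y)).length ≤ p.eval (x.length + y.length)) :
    ¬ ∃ q : Polynomial ℕ,
        ∀ n : ℕ, {w : List (Fin k) | w ∈ L ∧ w.length ≤ n}.ncard ≤ q.eval n := by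
  rintro ⟨q, hq⟩
  obtain ⟨p, hp⟩ := hpoly
  obtain ⟨x₀, hx₀⟩ := hL
  obtain ⟨n, hn⟩ := ((q.comp (p.comp (C x₀.length + X))).eventually_eval_nat_lt_pow
    (b := k) hk).exists
  set S := {w : List (Fin k) | w ∈ L ∧ w.length ≤ p.eval (x₀.length + n)}
  have hmaps : Set.MapsTo (fun y ↦ Pad (x₀, y)) {y | y.length = n} S :=
    fun y hy ↦ ⟨(hPad x₀ y).2 hx₀, hy ▸ hp x₀ y⟩
  have hinj : Set.InjOn (fun y ↦ Pad (x₀, y)) {y | y.length = n} :=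
    fun y _ z _ h ↦ by simpa only [hDec] using congrArg Dec h
  have hfin : S.Finite := (List.finite_length_le _ _).subset fun _ hw ↦ hw.2
  have hcount : k ^ n ≤ S.ncard := by
    simpa [List.ncard_setOf_length_eq] using Set.ncard_le_ncard_of_injOn _ hmaps hinj hfin
  simp only [eval_comp, eval_add, eval_C, eval_X] at hn
  exact (hcount.trans (hq _)).not_gt hn
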